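/- Fix n ≥ 1, weights w : Finset(Fin n) → ℝ with w(S) ≥ 0 for all S, and signs ε : Finset(Fin n) → ℝ with ε(S) ∈ {−1, +1} for all S. Let x_G : Fin n → ZMod 2 be any point at which f attains its minimum over Fin n → ZMod 2. Then the spectral gap of f is at most the spectral gap of g: min_{x ≠ x_G} f(x) − f(x_G) ≤ min_{e ≠ 0} g(e). (Note that g attains its minimum value 0 at e = 0, so the right-hand side equals the gap of the de-signed Hamiltonian.) -/

import Mathlib

open Finset

/-- The character `χ_S(x)`: equals `+1` if `Σ_{i∈S} x_i = 0` in `ZMod 2`, and `-1` otherwise. -/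
noncomputable def chi {n : ℕ} (S : Finset (Fin n)) (x : Fin n → ZMod 2) : ℝ :=
  if (∑ i ∈ S, x i) = 0 then 1 else -1

/-- The eigenvalue function of an X-diagonal Hamiltonian (shifted by a constant). -/
noncomputable def fEig {n : ℕ} (w ε : Finset (Fin n) → ℝ) (x : Fin n → ZMod 2) : ℝ :=
  ∑ S : Finset (Fin n), w S * (1 - ε S * chi S x)

/-- The eigenvalue function of the de-signed counterpart. -/
noncomputable def gEig {n : ℕ} (w : Finset (Fin n) → ℝ) (x : Fin n → ZMod 2) : ℝ :=
  ∑ S : Finset (Fin n), w S * (1 - chi S x)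

/-!
Translating the argument by `e` multiplies every character by `χ_S(e) = ±1`, so
`f(x + e) - f(x) = Σ_S w(S) ε(S) χ_S(x) (1 - χ_S(e))`. Since `1 - χ_S(e) ≥ 0` and
`|ε(S) χ_S(x)| ≤ 1`, each term is at most `w(S) (1 - χ_S(e))`, whence
`f(x + e) - f(x) ≤ g(e)` for every `x`. Reindexing the left infimum by `x = x_G + e` finishes.
-/

section Characters

variable {n : ℕ} (S : Finset (Fin n))

theorem abs_chi (x : Fin n → ZMod 2) : |chi S x| = 1 := by
  unfold chi
  split_ifs <;> norm_num

theorem chi_le_one (x : Fin n → ZMod 2) : chi S x ≤ 1 :=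
  (le_abs_self _).trans (abs_chi S x).le

theorem chi_add (x e : Fin n → ZMod 2) : chi S (x + e) = chi S x * chi S e := by
  have hZMod2 : ∀ a : ZMod 2, a = 0 ∨ a = 1 := by decide
  simp only [chi, Pi.add_apply, sum_add_distrib]
  rcases hZMod2 (∑ i ∈ S, x i) with hx | hx <;> rcases hZMod2 (∑ i ∈ S, e i) with he | he <;>
    simp [hx, he]
  decide

end Characters

theorem fEig_add_sub_fEig {n : ℕ} (w ε : Finset (Fin n) → ℝ) (x e : Fin n → ZMod 2) :
    fEig w ε (x + e) - fEig w ε x = ∑ S, w S * (ε S * chi S x) * (1 - chi S e) := by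
  simp only [fEig, ← sum_sub_distrib, chi_add]
  refine sum_congr rfl fun S _ => ?_
  ring

theorem fEig_add_sub_fEig_le_gEig {n : ℕ} {w ε : Finset (Fin n) → ℝ} (hw : ∀ S, 0 ≤ w S)
    (hε : ∀ S, |ε S| ≤ 1) (x e : Fin n → ZMod 2) :
    fEig w ε (x + e) - fEig w ε x ≤ gEig w e := by
  rw [fEig_add_sub_fEig, gEig]
  refine sum_le_sum fun S _ => ?_
  have hsign : ε S * chi S x ≤ 1 :=
    (le_abs_self _).trans (by rw [abs_mul, abs_chi, mul_one]; exact hε S)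
  have hweight : 0 ≤ w S * (1 - chi S e) := mul_nonneg (hw S) (sub_nonneg.2 (chi_le_one S e))
  nlinarith

theorem gap_le_designed_gap_general
    (n : ℕ)
    (w ε : Finset (Fin n) → ℝ)
    (hw : ∀ S, 0 ≤ w S)
    (hε : ∀ S, ε S = 1 ∨ ε S = -1)
    (xG : Fin n → ZMod 2) :
    (⨅ x : {x : Fin n → ZMod 2 // x ≠ xG}, (fEig w ε x - fEig w ε xG)) ≤
      ⨅ e : {e : Fin n → ZMod 2 // e ≠ 0}, gEig w e := by
  have hε_abs : ∀ S, |ε S| ≤ 1 := fun S => by rcases hε S with h | h <;> simp [h]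
  let translate : {e : Fin n → ZMod 2 // e ≠ 0} ≃ {x : Fin n → ZMod 2 // x ≠ xG} :=
    (Equiv.addLeft xG).subtypeEquiv fun e => by simp
  rw [← translate.iInf_comp]
  exact ciInf_mono (Set.finite_range _).bddBelow fun e =>
    fEig_add_sub_fEig_le_gEig hw hε_abs xG e

/-- For nonnegative weights `w` and signs `ε S ∈ {−1,+1}`, if `xG` minimizes `f`,
then the spectral gap of `f` is at most the spectral gap of `g`:
`min_{x ≠ xG} f(x) − f(xG) ≤ min_{e ≠ 0} g(e)`. -/
theorem gap_le_designed_gap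
    (n : ℕ) (hn : 1 ≤ n)
    (w ε : Finset (Fin n) → ℝ)
    (hw : ∀ S, 0 ≤ w S)
    (hε : ∀ S, ε S = 1 ∨ ε S = -1)
    (xG : Fin n → ZMod 2)
    (hxG : ∀ x, fEig w ε xG ≤ fEig w ε x) :
    (⨅ x : {x : Fin n → ZMod 2 // x ≠ xG}, (fEig w ε x - fEig w ε xG)) ≤
      ⨅ e : {e : Fin n → ZMod 2 // e ≠ 0}, gEig w e :=
  gap_le_designed_gap_general n w ε hw hε xG
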